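/- Let h, c, p, s be smooth functions of one variable, and define c_h, p_h, s_h and the D-operator as usual. Then, identically as differential polynomials, the variational derivative of H_h = ∫D_{(c,p,s)}(h)dx is E(D_{(c,p,s)}(h)) = h' + ε²·((1/2)c_h'(u)u_x² + c_h(u)u_xx) + ε⁴·(2p_h u_xxxx + 4p_h' u_x u_xxx + 2(p_h'' − 6s_h)u_x²u_xx + 3p_h' u_xx² − 3s_h' u_x⁴), and consequently the Hamiltonian perturbation u_t = ∂_x E(D_{(c,p,s)}(h)) is the explicit fifth-order PDE u_t = h''(u)u_x + ε²·∂_x((1/2)c_h'u_x² + c_h u_xx) + ε⁴·∂_x(2p_h u_xxxx + 4p_h' u_x u_xxx + 2(p_h'' − 6s_h)u_x²u_xx + 3p_h' u_xx² − 3s_h' u_x⁴), where all coefficient functions are evaluated at u. -/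

import Mathlib

open Set

noncomputable section

/-- Partial derivative of a jet density with respect to the k-th jet variable `u^(k)`. -/
def pderivJet (P : (ℕ → ℝ) → ℝ) (k : ℕ) (v : ℕ → ℝ) : ℝ :=
  deriv (fun y => P (Function.update v k y)) (v k)

/-- Total x-derivative of a jet density (no explicit x,t dependence). -/
def totalDer (P : (ℕ → ℝ) → ℝ) : (ℕ → ℝ) → ℝ :=
  fun v => ∑' k : ℕ, v (k + 1) * pderivJet P k v

/-- Euler-Lagrange operator `E(P) = Σ (-1)^k (d/dx)^k ∂P/∂u^(k)`. -/
def EulerOp (P : (ℕ → ℝ) → ℝ) : (ℕ → ℝ) → ℝ :=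
  fun v => ∑' k : ℕ, (-1 : ℝ) ^ k * (totalDer^[k] (pderivJet P k)) v

/-- Total x-derivative for densities with explicit x,t dependence. -/
def totalDerXT (P : ℝ → ℝ → (ℕ → ℝ) → ℝ) : ℝ → ℝ → (ℕ → ℝ) → ℝ :=
  fun x t v => deriv (fun y => P y t v) x + ∑' k : ℕ, v (k + 1) * pderivJet (P x t) k v

/-- Euler-Lagrange operator for densities with explicit x,t dependence. -/
def EulerOpXT (P : ℝ → ℝ → (ℕ → ℝ) → ℝ) : ℝ → ℝ → (ℕ → ℝ) → ℝ :=
  fun x t v => ∑' k : ℕ, (-1 : ℝ) ^ k *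
    (totalDerXT^[k] (fun x' t' w => pderivJet (P x' t') k w)) x t v

/-- The jet of a function of one variable at a point. -/
def jetsAt (w : ℝ → ℝ) (x : ℝ) : ℕ → ℝ := fun k => iteratedDeriv k w x

def cCoef (c h : ℝ → ℝ) (u : ℝ) : ℝ := c u * iteratedDeriv 3 h u

def pCoef (c p h : ℝ → ℝ) (u : ℝ) : ℝ :=
  p u * iteratedDeriv 3 h u + (3/10) * (c u)^2 * iteratedDeriv 4 h u

def sCoef (c p s h : ℝ → ℝ) (u : ℝ) : ℝ :=
  s u * iteratedDeriv 3 h u - (1/8) * c u * iteratedDeriv 2 c u * iteratedDeriv 4 h u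
    - (1/8) * c u * deriv c u * iteratedDeriv 5 h u - (1/24) * (c u)^2 * iteratedDeriv 6 h u
    - (1/6) * deriv p u * iteratedDeriv 4 h u - (1/6) * p u * iteratedDeriv 5 h u

/-- Dubrovin's D-operator. -/
def Dop (c p s h : ℝ → ℝ) (ε : ℝ) (v : ℕ → ℝ) : ℝ :=
  h (v 0) - ε^2/2 * cCoef c h (v 0) * (v 1)^2
    + ε^4 * (pCoef c p h (v 0) * (v 2)^2 + sCoef c p s h (v 0) * (v 1)^4)

/-- Conservation defect of a t-dependent family of densities along (eveq). -/
def consDefect (c p s h : ℝ → ℝ) (S : ℝ → ℝ → ℝ → (ℕ → ℝ) → ℝ) (ε x t : ℝ) (v : ℕ → ℝ) : ℝ :=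
  deriv (fun τ => EulerOpXT (S ε) x τ v) t
    + EulerOpXT (fun x' t' w => EulerOpXT (S ε) x' t' w * totalDer (EulerOp (Dop c p s h ε)) w) x t v

/-- Conservation up to order `O(ε^K)` along (eveq). -/
def ConservedUpTo (c p s h : ℝ → ℝ) (S : ℝ → ℝ → ℝ → (ℕ → ℝ) → ℝ) (K : ℕ) : Prop :=
  ∀ x t : ℝ, ∀ v : ℕ → ℝ, ∀ j < K, iteratedDeriv j (fun ε => consDefect c p s h S ε x t v) 0 = 0


/-! All densities involved depend on finitely many jet variables, so the series defining
`totalDer` and `EulerOp` reduce to finite sums, and `totalDer` is additive on densities whose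
partial maps are differentiable. For `H(u) - ε²/2 C(u) u_x² + ε⁴ (P(u) u_xx² + S(u) u_x⁴)` the
Euler–Lagrange operator is `∂_u - D ∂_{u_x} + D² ∂_{u_xx}`, computed term by term; the D-operator is
the instance `H = h`, `C = c_h`, `P = p_h`, `S = s_h`, and `∂_x E(D(h))` follows by additivity
of `D`. -/

open scoped ContDiff

@[fun_prop]
theorem ContDiff.iteratedDeriv_infty {f : ℝ → ℝ} (hf : ContDiff ℝ ∞ f) (n : ℕ) :
    ContDiff ℝ ∞ (iteratedDeriv n f) := by
  rw [iteratedDeriv_eq_iterate]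
  exact hf.iterate_deriv n

@[fun_prop]
theorem differentiable_update_apply (v : ℕ → ℝ) (k i : ℕ) :
    Differentiable ℝ (fun y : ℝ => Function.update v k y i) := by
  rcases eq_or_ne i k with rfl | hik
  · simp only [Function.update_self]
    exact differentiable_id
  · simp only [Function.update_of_ne hik]
    exact differentiable_const (v i)

def DependsOnFirst (N : ℕ) (P : (ℕ → ℝ) → ℝ) : Prop :=
  ∀ v w : ℕ → ℝ, (∀ i < N, v i = w i) → P v = P w

def SeparatelyDifferentiable (P : (ℕ → ℝ) → ℝ) : Prop :=
  ∀ (v : ℕ → ℝ) (k : ℕ), Differentiable ℝ (fun y => P (Function.update v k y))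

namespace DependsOnFirst

variable {N : ℕ} {P Q : (ℕ → ℝ) → ℝ}

theorem add (hP : DependsOnFirst N P) (hQ : DependsOnFirst N Q) :
    DependsOnFirst N fun w => P w + Q w := fun v w h =>
  congrArg₂ (· + ·) (hP v w h) (hQ v w h)

theorem const_mul (hP : DependsOnFirst N P) (a : ℝ) : DependsOnFirst N fun w => a * P w :=
  fun v w h => congrArg (a * ·) (hP v w h)

theorem pderivJet_eq_zero (hP : DependsOnFirst N P) {k : ℕ} (hk : N ≤ k) :
    pderivJet P k = fun _ => 0 := by
  funext v
  have hconst : (fun y => P (Function.update v k y)) = fun _ => P v :=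
    funext fun y => hP _ _ fun i hi => Function.update_of_ne (by omega) y v
  simp only [pderivJet, hconst, deriv_const]

theorem totalDer_eq_sum (hP : DependsOnFirst N P) (v : ℕ → ℝ) :
    totalDer P v = ∑ k ∈ Finset.range N, v (k + 1) * pderivJet P k v := by
  refine tsum_eq_sum fun k hk => ?_
  rw [hP.pderivJet_eq_zero (by simpa using hk), mul_zero]

end DependsOnFirst

theorem SeparatelyDifferentiable.add {P Q : (ℕ → ℝ) → ℝ} (hP : SeparatelyDifferentiable P)
    (hQ : SeparatelyDifferentiable Q) : SeparatelyDifferentiable fun w => P w + Q w :=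
  fun v k => (hP v k).add (hQ v k)

theorem SeparatelyDifferentiable.const_mul {P : (ℕ → ℝ) → ℝ} (hP : SeparatelyDifferentiable P)
    (a : ℝ) : SeparatelyDifferentiable fun w => a * P w :=
  fun v k => (hP v k).const_mul a

theorem totalDer_zero : totalDer (fun _ => 0) = fun _ => 0 := by
  funext v
  simp [(show DependsOnFirst 0 fun _ => (0 : ℝ) from fun _ _ _ => rfl).totalDer_eq_sum]

theorem DependsOnFirst.eulerOp_eq_sum {N : ℕ} {P : (ℕ → ℝ) → ℝ} (hP : DependsOnFirst N P)
    (v : ℕ → ℝ) :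
    EulerOp P v = ∑ k ∈ Finset.range N, (-1) ^ k * totalDer^[k] (pderivJet P k) v := by
  refine tsum_eq_sum fun k hk => ?_
  rw [hP.pderivJet_eq_zero (by simpa using hk), Function.iterate_fixed totalDer_zero, mul_zero]

theorem totalDer_const_mul (a : ℝ) (P : (ℕ → ℝ) → ℝ) (v : ℕ → ℝ) :
    totalDer (fun w => a * P w) v = a * totalDer P v := by
  simp only [totalDer, pderivJet, deriv_const_mul_field', ← tsum_mul_left]
  exact tsum_congr fun k => by ring

theorem totalDer_add {N : ℕ} {P Q : (ℕ → ℝ) → ℝ} (hP : DependsOnFirst N P)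
    (hQ : DependsOnFirst N Q) (hP' : SeparatelyDifferentiable P)
    (hQ' : SeparatelyDifferentiable Q) (v : ℕ → ℝ) :
    totalDer (fun w => P w + Q w) v = totalDer P v + totalDer Q v := by
  rw [(hP.add hQ).totalDer_eq_sum, hP.totalDer_eq_sum, hQ.totalDer_eq_sum,
    ← Finset.sum_add_distrib]
  refine Finset.sum_congr rfl fun k _ => ?_
  rw [pderivJet, deriv_fun_add (hP' v k _) (hQ' v k _), mul_add]
  rfl

theorem totalDer_comp_zero (f : ℝ → ℝ) (v : ℕ → ℝ) :
    totalDer (fun w => f (w 0)) v = deriv f (v 0) * v 1 := by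
  have hf : DependsOnFirst 1 fun w => f (w 0) := fun v w h => congrArg f (h 0 one_pos)
  simp [hf.totalDer_eq_sum, pderivJet, mul_comm]

def dispersiveDensity (H C P S : ℝ → ℝ) (ε : ℝ) (w : ℕ → ℝ) : ℝ :=
  H (w 0) - ε^2/2 * C (w 0) * (w 1)^2 + ε^4 * (P (w 0) * (w 2)^2 + S (w 0) * (w 1)^4)

def varDerivEps2 (C : ℝ → ℝ) (w : ℕ → ℝ) : ℝ :=
  (1/2) * deriv C (w 0) * (w 1)^2 + C (w 0) * w 2

def varDerivEps4 (P S : ℝ → ℝ) (w : ℕ → ℝ) : ℝ :=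
  2 * P (w 0) * w 4 + 4 * deriv P (w 0) * w 1 * w 3
    + 2 * (iteratedDeriv 2 P (w 0) - 6 * S (w 0)) * (w 1)^2 * w 2
    + 3 * deriv P (w 0) * (w 2)^2 - 3 * deriv S (w 0) * (w 1)^4

section DispersiveDensity

variable {H C P S : ℝ → ℝ} (ε : ℝ)

/- In all the computations below the `Function.update`s are evaluated at the numerals first;
otherwise `simp` would try to differentiate them. -/

theorem pderivJet_one_dispersiveDensity :
    pderivJet (dispersiveDensity H C P S ε) 1
      = fun w => -(ε^2 * C (w 0) * w 1) + 4 * ε^4 * S (w 0) * (w 1)^3 := by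
  funext w
  simp only [pderivJet, dispersiveDensity, Function.update_apply, Nat.reduceEqDiff, ↓reduceIte]
  simp (disch := fun_prop) only [deriv_fun_add, deriv_fun_sub, deriv_fun_mul, deriv_fun_pow,
    deriv_div_const, deriv_const', deriv_id'']
  ring

theorem pderivJet_two_dispersiveDensity :
    pderivJet (dispersiveDensity H C P S ε) 2 = fun w => 2 * ε^4 * P (w 0) * w 2 := by
  funext w
  simp only [pderivJet, dispersiveDensity, Function.update_apply, Nat.reduceEqDiff, ↓reduceIte]
  simp (disch := fun_prop) only [deriv_fun_add, deriv_fun_sub, deriv_fun_mul, deriv_fun_pow,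
    deriv_div_const, deriv_const', deriv_id'']
  ring

theorem eulerOp_dispersiveDensity (hH : Differentiable ℝ H) (hC : Differentiable ℝ C)
    (hP : Differentiable ℝ P) (hS : Differentiable ℝ S) (hP' : Differentiable ℝ (deriv P)) :
    EulerOp (dispersiveDensity H C P S ε)
      = fun w => deriv H (w 0) + ε^2 * varDerivEps2 C w + ε^4 * varDerivEps4 P S w := by
  have hD2 : totalDer (fun w => 2 * ε^4 * P (w 0) * w 2)
      = fun w => 2 * ε^4 * (deriv P (w 0) * w 1 * w 2 + P (w 0) * w 3) := by
    funext w
    rw [DependsOnFirst.totalDer_eq_sum (N := 3) fun v w h => by simp (disch := omega) only [h]]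
    simp only [Finset.sum_range_succ, Finset.sum_range_zero, pderivJet, Function.update_apply,
      Nat.reduceEqDiff, ↓reduceIte]
    simp (disch := fun_prop) only [deriv_fun_mul, deriv_fun_pow, deriv_const',
      deriv_const_mul_id']
    ring
  have hdep : DependsOnFirst 3 (dispersiveDensity H C P S ε) := fun v w h => by
    simp (disch := omega) only [dispersiveDensity, h]
  have hdep1 : DependsOnFirst 2
      fun w => -(ε^2 * C (w 0) * w 1) + 4 * ε^4 * S (w 0) * (w 1)^3 := fun v w h => by
    simp (disch := omega) only [h]
  have hdep2 : DependsOnFirst 4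
      fun w => 2 * ε^4 * (deriv P (w 0) * w 1 * w 2 + P (w 0) * w 3) := fun v w h => by
    simp (disch := omega) only [h]
  funext v
  rw [hdep.eulerOp_eq_sum]
  simp only [Finset.sum_range_succ, Finset.sum_range_zero, Function.iterate_succ_apply',
    Function.iterate_zero_apply, pderivJet_one_dispersiveDensity, pderivJet_two_dispersiveDensity,
    hD2, hdep1.totalDer_eq_sum, hdep2.totalDer_eq_sum]
  simp only [pderivJet, dispersiveDensity, varDerivEps2, varDerivEps4, Function.update_apply,
    Nat.reduceEqDiff, ↓reduceIte, iteratedDeriv_succ, iteratedDeriv_zero]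
  simp (disch := fun_prop) only [deriv_fun_add, deriv_fun_sub, deriv_fun_mul, deriv_fun_pow,
    deriv_div_const, deriv.fun_neg', deriv_const', deriv_id'', deriv_const_mul_id']
  ring

theorem totalDer_eulerOp_dispersiveDensity (hH : Differentiable ℝ H)
    (hH' : Differentiable ℝ (deriv H)) (hC : Differentiable ℝ C) (hC' : Differentiable ℝ (deriv C))
    (hP : Differentiable ℝ P) (hP' : Differentiable ℝ (deriv P))
    (hP'' : Differentiable ℝ (iteratedDeriv 2 P)) (hS : Differentiable ℝ S)
    (hS' : Differentiable ℝ (deriv S)) (v : ℕ → ℝ) :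
    totalDer (EulerOp (dispersiveDensity H C P S ε)) v
      = iteratedDeriv 2 H (v 0) * v 1 + ε^2 * totalDer (varDerivEps2 C) v
        + ε^4 * totalDer (varDerivEps4 P S) v := by
  have hdep0 : DependsOnFirst 5 fun w => deriv H (w 0) := fun v w h => by
    simp (disch := omega) only [h]
  have hdep2 : DependsOnFirst 5 (varDerivEps2 C) := fun v w h => by
    simp (disch := omega) only [varDerivEps2, h]
  have hdep4 : DependsOnFirst 5 (varDerivEps4 P S) := fun v w h => by
    simp (disch := omega) only [varDerivEps4, h]
  have hdiff0 : SeparatelyDifferentiable fun w => deriv H (w 0) := fun v k => by fun_prop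
  have hdiff2 : SeparatelyDifferentiable (varDerivEps2 C) := fun v k => by
    unfold varDerivEps2
    fun_prop
  have hdiff4 : SeparatelyDifferentiable (varDerivEps4 P S) := fun v k => by
    unfold varDerivEps4
    fun_prop
  rw [eulerOp_dispersiveDensity ε hH hC hP hS hP',
    totalDer_add (hdep0.add (hdep2.const_mul _)) (hdep4.const_mul _)
      (hdiff0.add (hdiff2.const_mul _)) (hdiff4.const_mul _),
    totalDer_add hdep0 (hdep2.const_mul _) hdiff0 (hdiff2.const_mul _),
    totalDer_const_mul, totalDer_const_mul, totalDer_comp_zero, iteratedDeriv_succ,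
    iteratedDeriv_one]

end DispersiveDensity

/-- the explicit form of the variational derivative `E(D_{(c,p,s)}(h))` and of
the Hamiltonian perturbation `u_t = ∂_x E(D_{(c,p,s)}(h))`. -/
theorem explicit_euler_lagrange_of_Dop
    (h c p s : ℝ → ℝ)
    (hh : ContDiff ℝ (⊤ : ℕ∞) h) (hc : ContDiff ℝ (⊤ : ℕ∞) c)
    (hp : ContDiff ℝ (⊤ : ℕ∞) p) (hs : ContDiff ℝ (⊤ : ℕ∞) s) :
    (∀ (ε : ℝ) (v : ℕ → ℝ),
      EulerOp (Dop c p s h ε) v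
        = deriv h (v 0)
          + ε^2 * ((1/2) * deriv (cCoef c h) (v 0) * (v 1)^2 + cCoef c h (v 0) * v 2)
          + ε^4 * (2 * pCoef c p h (v 0) * v 4
              + 4 * deriv (pCoef c p h) (v 0) * v 1 * v 3
              + 2 * (iteratedDeriv 2 (pCoef c p h) (v 0) - 6 * sCoef c p s h (v 0)) * (v 1)^2 * v 2
              + 3 * deriv (pCoef c p h) (v 0) * (v 2)^2
              - 3 * deriv (sCoef c p s h) (v 0) * (v 1)^4))
    ∧ (∀ (ε : ℝ) (v : ℕ → ℝ),
      totalDer (EulerOp (Dop c p s h ε)) v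
        = iteratedDeriv 2 h (v 0) * v 1
          + ε^2 * totalDer (fun w =>
              (1/2) * deriv (cCoef c h) (w 0) * (w 1)^2 + cCoef c h (w 0) * w 2) v
          + ε^4 * totalDer (fun w =>
              2 * pCoef c p h (w 0) * w 4
              + 4 * deriv (pCoef c p h) (w 0) * w 1 * w 3
              + 2 * (iteratedDeriv 2 (pCoef c p h) (w 0) - 6 * sCoef c p s h (w 0)) * (w 1)^2 * w 2
              + 3 * deriv (pCoef c p h) (w 0) * (w 2)^2
              - 3 * deriv (sCoef c p s h) (w 0) * (w 1)^4) v) := by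
  have hC : ContDiff ℝ ∞ (cCoef c h) := by unfold cCoef; fun_prop
  have hP : ContDiff ℝ ∞ (pCoef c p h) := by unfold pCoef; fun_prop
  have hS : ContDiff ℝ ∞ (sCoef c p s h) := by unfold sCoef; fun_prop
  have hd : ∀ {f : ℝ → ℝ}, ContDiff ℝ ∞ f → Differentiable ℝ f :=
    fun hf => hf.differentiable (by simp)
  refine ⟨fun ε v => ?_, fun ε v => ?_⟩
  · exact congrFun (eulerOp_dispersiveDensity ε (hd hh) (hd hC) (hd hP) (hd hS) (hd hP.deriv')) v
  · exact totalDer_eulerOp_dispersiveDensity ε (hd hh) (hd hh.deriv') (hd hC) (hd hC.deriv')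
      (hd hP) (hd hP.deriv') (hd (hP.iteratedDeriv_infty 2)) (hd hS) (hd hS.deriv') v
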